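/- There exists a nowhere-vanishing function f on a connected coordinate patch such that the volume form τ = f √g dx^1 ∧ ⋯ ∧ dx^n satisfies the transposed-derivative equation ∂_μ(f√g) - Γ_{κμ}^κ (f√g) = 0 if and only if the 1-form (T_μ + V_μ) dx^μ is exact, in which case f = C e^θ with T_μ + V_μ = ∂_μ θ and C > 0 constant. -/

import Mathlib

open scoped BigOperators

/-- Partial derivative `∂_μ f` at `x` (coordinate direction `μ`). -/
noncomputable def pd {n : ℕ} (μ : Fin n) (f : (Fin n → ℝ) → ℝ) (x : Fin n → ℝ) : ℝ :=
  fderiv ℝ f x (Pi.single μ 1)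

/-- Covariant derivative of the metric, `D_μ g_{νκ}`. -/
noncomputable def covDg {n : ℕ} (Γ : Fin n → Fin n → Fin n → (Fin n → ℝ) → ℝ)
    (g : Fin n → Fin n → (Fin n → ℝ) → ℝ) (μ ν κ : Fin n) (x : Fin n → ℝ) : ℝ :=
  pd μ (g ν κ) x - (∑ σ, Γ μ ν σ x * g σ κ x) - ∑ σ, Γ μ κ σ x * g ν σ x

/-- Torsion tensor with lowered last index, `T_{μνκ} = (Γ_{μν}^σ - Γ_{νμ}^σ) g_{σκ}`. -/
noncomputable def torLow {n : ℕ} (Γ : Fin n → Fin n → Fin n → (Fin n → ℝ) → ℝ)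
    (g : Fin n → Fin n → (Fin n → ℝ) → ℝ) (μ ν κ : Fin n) (x : Fin n → ℝ) : ℝ :=
  ∑ σ, (Γ μ ν σ x - Γ ν μ σ x) * g σ κ x

/-- Contorsion tensor `K_{μνκ} = -(1/2)(T_{νκμ} + T_{μκν} - T_{μνκ})`. -/
noncomputable def conLow {n : ℕ} (Γ : Fin n → Fin n → Fin n → (Fin n → ℝ) → ℝ)
    (g : Fin n → Fin n → (Fin n → ℝ) → ℝ) (μ ν κ : Fin n) (x : Fin n → ℝ) : ℝ :=
  -(1/2) * (torLow Γ g ν κ μ x + torLow Γ g μ κ ν x - torLow Γ g μ ν κ x)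

/-- Nonmetricity tensor `V_{μνκ} = -(1/2)(D_μ g_{νκ} + D_ν g_{κμ} - D_κ g_{μν})`. -/
noncomputable def nonmetLow {n : ℕ} (Γ : Fin n → Fin n → Fin n → (Fin n → ℝ) → ℝ)
    (g : Fin n → Fin n → (Fin n → ℝ) → ℝ) (μ ν κ : Fin n) (x : Fin n → ℝ) : ℝ :=
  -(1/2) * (covDg Γ g μ ν κ x + covDg Γ g ν κ μ x - covDg Γ g κ μ ν x)

/-- Christoffel symbols `{κ over μν}` of the metric `g` (with inverse metric `ginv`). -/
noncomputable def chr {n : ℕ} (g ginv : Fin n → Fin n → (Fin n → ℝ) → ℝ)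
    (κ μ ν : Fin n) (x : Fin n → ℝ) : ℝ :=
  (1/2) * ∑ σ, ginv κ σ x * (pd μ (g ν σ) x + pd ν (g σ μ) x - pd σ (g μ ν) x)

/-- Trace of the torsion tensor, `T_ν = T_{μν}^μ`. -/
noncomputable def torTr {n : ℕ} (Γ : Fin n → Fin n → Fin n → (Fin n → ℝ) → ℝ)
    (ν : Fin n) (x : Fin n → ℝ) : ℝ :=
  ∑ μ, (Γ μ ν μ x - Γ ν μ μ x)

/-- Trace of the nonmetricity tensor, `V_ν = V_{μν}{}^μ = g^{μσ} V_{μνσ}`. -/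
noncomputable def nonmetTr {n : ℕ} (Γ : Fin n → Fin n → Fin n → (Fin n → ℝ) → ℝ)
    (g ginv : Fin n → Fin n → (Fin n → ℝ) → ℝ) (ν : Fin n) (x : Fin n → ℝ) : ℝ :=
  ∑ μ, ∑ σ, ginv μ σ x * nonmetLow Γ g μ ν σ x

/-- `√g`, the square root of the metric determinant. -/
noncomputable def sqrtg {n : ℕ} (g : Fin n → Fin n → (Fin n → ℝ) → ℝ)
    (x : Fin n → ℝ) : ℝ :=
  Real.sqrt (Matrix.det (Matrix.of fun μ ν => g μ ν x))


/-!
Jacobi's formula `∂_μ log det g = tr (g⁻¹ ∂_μ g)` and a contraction of the nonmetricity tensor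
give the decomposition `Γ_{κμ}^κ = ∂_μ log √g + T_μ + V_μ`: in `g^{μσ} V_{μνσ}` the terms
`D_μ g_{νσ}` and `D_σ g_{μν}` cancel by symmetry, while
`g^{μσ} D_ν g_{σμ} = tr (g⁻¹ ∂_ν g) - 2 Γ_{νκ}^κ`. Hence `D̃_μ (f √g) = √g (∂_μ f - (T_μ + V_μ) f)`,
so the admissible `f` are the nowhere-vanishing solutions of `∂_μ f = (T_μ + V_μ) f`. For such
`f`, `log |f|` is a potential of `T + V`; conversely `e^θ` is a solution; and for positive `f`
the difference `log f - θ` has vanishing gradient on the connected space `ℝⁿ`, hence is constant.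
-/

open Matrix Finset

section Jacobi

variable {R ι : Type*} [CommRing R] [Fintype ι] [DecidableEq ι]

theorem sum_perm_sign_mul_sum_prod_erase_eq_trace_adjugate_mul (A H : Matrix ι ι R) :
    ∑ σ : Equiv.Perm ι, ((Equiv.Perm.sign σ : ℤ) : R) *
      ∑ i, (∏ j ∈ univ.erase i, A (σ j) j) * H (σ i) i = trace (adjugate A * H) := by
  calc _ = ∑ i, (A.updateCol i fun k => H k i).det := by
        simp only [mul_sum]
        rw [sum_comm]
        refine sum_congr rfl fun i _ => ?_
        rw [det_apply']
        refine sum_congr rfl fun σ _ => ?_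
        rw [← mul_prod_erase univ _ (mem_univ i), updateCol_self,
          prod_congr rfl fun j hj => updateCol_ne (ne_of_mem_erase hj)]
        ring
    _ = trace (adjugate A * H) := by
        simp only [← cramer_apply, cramer_eq_adjugate_mulVec, trace, Matrix.diag, mul_apply, mulVec,
          dotProduct]

theorem adjugate_eq_det_smul_of_mul_eq_one {A B : Matrix ι ι R} (h : A * B = 1) :
    adjugate A = A.det • B := by
  calc adjugate A = adjugate A * (A * B) := by rw [h, Matrix.mul_one]
    _ = A.det • B := by rw [← Matrix.mul_assoc, adjugate_mul, smul_mul, Matrix.one_mul]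

end Jacobi

theorem sum_sum_mul_eq_trace_mul {R ι : Type*} [CommRing R] [Fintype ι] (A B : Matrix ι ι R) :
    ∑ i, ∑ j, A i j * B j i = trace (A * B) := by
  simp [trace, mul_apply]

theorem hasFDerivAt_det {𝕜 E ι : Type*} [NontriviallyNormedField 𝕜] [NormedAddCommGroup E]
    [NormedSpace 𝕜 E] [Fintype ι] [DecidableEq ι] (M : ι → ι → E → 𝕜) {x : E}
    (hM : ∀ i j, DifferentiableAt 𝕜 (M i j) x) :
    HasFDerivAt (fun y => (of fun i j => M i j y).det)
      (∑ σ : Equiv.Perm ι, ((Equiv.Perm.sign σ : ℤ) : 𝕜) •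
        ∑ i, (∏ j ∈ univ.erase i, M (σ j) j x) • fderiv 𝕜 (M (σ i) i) x) x := by
  simp only [det_apply', of_apply]
  exact HasFDerivAt.fun_sum fun σ _ =>
    (HasFDerivAt.finsetProd fun i _ => (hM (σ i) i).hasFDerivAt).const_mul _

section PartialDerivative

variable {m : ℕ} {f h : (Fin m → ℝ) → ℝ} {x : Fin m → ℝ}

theorem pd_mul (hf : DifferentiableAt ℝ f x) (hh : DifferentiableAt ℝ h x) (μ : Fin m) :
    pd μ (fun y => f y * h y) x = f x * pd μ h x + h x * pd μ f x := by
  simp [pd, fderiv_fun_mul hf hh]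

theorem pd_comp {φ : ℝ → ℝ} {φ' : ℝ} (hφ : HasDerivAt φ φ' (f x))
    (hf : DifferentiableAt ℝ f x) (μ : Fin m) :
    pd μ (fun y => φ (f y)) x = φ' * pd μ f x := by
  change fderiv ℝ (φ ∘ f) x _ = _
  rw [(hφ.comp_hasFDerivAt x hf.hasFDerivAt).fderiv]
  rfl

theorem pd_log (hf : DifferentiableAt ℝ f x) (hfx : f x ≠ 0) (μ : Fin m) :
    pd μ (fun y => Real.log (f y)) x = pd μ f x / f x := by
  rw [pd_comp (Real.hasDerivAt_log hfx) hf, inv_mul_eq_div]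

theorem exists_eq_add_const_of_pd_eq (hf : Differentiable ℝ f) (hh : Differentiable ℝ h)
    (hpd : ∀ μ x, pd μ f x = pd μ h x) : ∃ c, ∀ x, f x = h x + c := by
  have hzero : ∀ y, fderiv ℝ (f - h) y = 0 := fun y =>
    ContinuousLinearMap.coe_injective <| (Pi.basisFun ℝ (Fin m)).ext fun μ => by
      simpa [fderiv_sub (hf y) (hh y), pd, sub_eq_zero] using hpd μ y
  refine ⟨f 0 - h 0, fun x => ?_⟩
  have := is_const_of_fderiv_eq_zero (hf.sub hh) hzero x 0
  simp only [Pi.sub_apply] at this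
  linarith

theorem pd_det {ι : Type*} [Fintype ι] [DecidableEq ι] (M : ι → ι → (Fin m → ℝ) → ℝ)
    (hM : ∀ i j, DifferentiableAt ℝ (M i j) x) (μ : Fin m) :
    pd μ (fun y => (of fun i j => M i j y).det) x
      = trace (adjugate (of fun i j => M i j x) * of fun i j => pd μ (M i j) x) := by
  rw [pd, (hasFDerivAt_det M hM).fderiv, ← sum_perm_sign_mul_sum_prod_erase_eq_trace_adjugate_mul]
  simp [pd]

theorem pd_log_det {ι : Type*} [Fintype ι] [DecidableEq ι] (M : ι → ι → (Fin m → ℝ) → ℝ)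
    (hM : ∀ i j, DifferentiableAt ℝ (M i j) x) {B : Matrix ι ι ℝ}
    (hB : (of fun i j => M i j x) * B = 1) (μ : Fin m) :
    pd μ (fun y => Real.log (of fun i j => M i j y).det) x
      = trace (B * of fun i j => pd μ (M i j) x) := by
  have hdet : (of fun i j => M i j x).det ≠ 0 :=
    left_ne_zero_of_mul_eq_one (by rw [← det_mul, hB, det_one])
  rw [pd_log (hasFDerivAt_det M hM).differentiableAt hdet, pd_det M hM,
    adjugate_eq_det_smul_of_mul_eq_one hB, smul_mul, trace_smul, smul_eq_mul,
    mul_div_cancel_left₀ _ hdet]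

end PartialDerivative

section Metric

variable {n : ℕ} {Γ : Fin n → Fin n → Fin n → (Fin n → ℝ) → ℝ}
  {g ginv : Fin n → Fin n → (Fin n → ℝ) → ℝ}

theorem ginv_mul_g_eq_one
    (hinv : ∀ μ ν x, (∑ σ, ginv μ σ x * g σ ν x) = if μ = ν then (1:ℝ) else 0) (x : Fin n → ℝ) :
    (of fun a b => ginv a b x) * (of fun a b => g a b x) = 1 := by
  ext μ ν
  simpa [mul_apply, one_apply] using hinv μ ν x

theorem ginv_comm (hsymm : ∀ μ ν, g μ ν = g ν μ)
    (hinv : ∀ μ ν x, (∑ σ, ginv μ σ x * g σ ν x) = if μ = ν then (1:ℝ) else 0)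
    (μ ν : Fin n) (x : Fin n → ℝ) : ginv μ ν x = ginv ν μ x := by
  have hG : (of fun a b => g a b x)ᵀ = of fun a b => g a b x := by
    ext a b
    exact congrFun (hsymm b a) x
  have hGinv : (of fun a b => ginv a b x)ᵀ = of fun a b => ginv a b x := by
    rw [← inv_eq_left_inv (ginv_mul_g_eq_one hinv x), transpose_nonsing_inv, hG]
  exact congrFun₂ hGinv ν μ

theorem pd_log_sqrtg (hg : ∀ μ ν, Differentiable ℝ (g μ ν))
    (hdet : ∀ y, 0 < Matrix.det (Matrix.of fun μ ν => g μ ν y))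
    (hinv : ∀ μ ν x, (∑ σ, ginv μ σ x * g σ ν x) = if μ = ν then (1:ℝ) else 0)
    (μ : Fin n) (x : Fin n → ℝ) :
    pd μ (fun y => Real.log (sqrtg g y)) x
      = trace ((of fun a b => ginv a b x) * of fun a b => pd μ (g a b) x) / 2 := by
  have hlog : (fun y => Real.log (sqrtg g y))
      = fun y => Real.log (of fun a b => g a b y).det / 2 :=
    funext fun y => Real.log_sqrt (hdet y).le
  have hdiff : DifferentiableAt ℝ (fun y => Real.log (of fun a b => g a b y).det) x :=
    ((hasFDerivAt_det g fun a b => hg a b x).differentiableAt).log (hdet x).ne'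
  have hhalf := pd_comp (φ := fun t => t / 2) ((hasDerivAt_id' _).div_const 2) hdiff μ
  rw [hlog, hhalf,
    pd_log_det g (fun a b => hg a b x) (mul_eq_one_comm.mp (ginv_mul_g_eq_one hinv x))]
  ring

theorem covDg_comm (hsymm : ∀ μ ν, g μ ν = g ν μ) (μ ν κ : Fin n) (x : Fin n → ℝ) :
    covDg Γ g μ ν κ x = covDg Γ g μ κ ν x := by
  have hs : ∀ a b, g a b x = g b a x := fun a b => congrFun (hsymm a b) x
  simp only [covDg, hsymm ν κ, hs _ κ, hs _ ν]
  ring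

theorem sum_ginv_mul_covDg
    (hinv : ∀ μ ν x, (∑ σ, ginv μ σ x * g σ ν x) = if μ = ν then (1:ℝ) else 0)
    (ν : Fin n) (x : Fin n → ℝ) :
    ∑ μ, ∑ σ, ginv μ σ x * covDg Γ g ν σ μ x
      = trace ((of fun a b => ginv a b x) * of fun a b => pd ν (g a b) x)
        - 2 * ∑ κ, Γ ν κ κ x := by
  set G : Matrix (Fin n) (Fin n) ℝ := of fun a b => g a b x
  set Ginv : Matrix (Fin n) (Fin n) ℝ := of fun a b => ginv a b x
  set dG : Matrix (Fin n) (Fin n) ℝ := of fun a b => pd ν (g a b) x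
  set C : Matrix (Fin n) (Fin n) ℝ := of fun a b => Γ ν a b x
  have hGinvG : Ginv * G = 1 := ginv_mul_g_eq_one hinv x
  have hGGinv : G * Ginv = 1 := mul_eq_one_comm.mp hGinvG
  have hcov : ∑ μ, ∑ σ, ginv μ σ x * covDg Γ g ν σ μ x = trace (Ginv * (dG - C * G - G * Cᵀ)) := by
    rw [← sum_sum_mul_eq_trace_mul]
    simp [covDg, Ginv, dG, C, G, mul_apply, mul_comm]
  rw [hcov, Matrix.mul_sub, Matrix.mul_sub, trace_sub, trace_sub, ← Matrix.mul_assoc,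
    ← Matrix.mul_assoc, hGinvG, Matrix.one_mul, trace_mul_cycle, hGGinv, Matrix.one_mul,
    trace_transpose]
  simp only [trace, diag_apply, of_apply, C]
  ring

theorem nonmetTr_eq (hsymm : ∀ μ ν, g μ ν = g ν μ)
    (hinv : ∀ μ ν x, (∑ σ, ginv μ σ x * g σ ν x) = if μ = ν then (1:ℝ) else 0)
    (ν : Fin n) (x : Fin n → ℝ) :
    nonmetTr Γ g ginv ν x
      = ∑ κ, Γ ν κ κ x - trace ((of fun a b => ginv a b x) * of fun a b => pd ν (g a b) x) / 2 := by
  have hsplit : nonmetTr Γ g ginv ν x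
      = -(1/2) * ((∑ μ, ∑ σ, ginv μ σ x * covDg Γ g μ ν σ x)
        + (∑ μ, ∑ σ, ginv μ σ x * covDg Γ g ν σ μ x)
        - ∑ μ, ∑ σ, ginv μ σ x * covDg Γ g σ μ ν x) := by
    simp only [nonmetTr, nonmetLow, mul_sum, ← sum_add_distrib, ← sum_sub_distrib]
    exact sum_congr rfl fun _ _ => sum_congr rfl fun _ _ => by ring
  have hswap : ∑ μ, ∑ σ, ginv μ σ x * covDg Γ g σ μ ν x
      = ∑ μ, ∑ σ, ginv μ σ x * covDg Γ g μ ν σ x := by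
    rw [sum_comm]
    exact sum_congr rfl fun μ _ => sum_congr rfl fun σ _ => by
      rw [ginv_comm hsymm hinv, covDg_comm hsymm]
  rw [hsplit, hswap, sum_ginv_mul_covDg hinv]
  ring

theorem connection_trace_eq (hsymm : ∀ μ ν, g μ ν = g ν μ)
    (hg : ∀ μ ν, Differentiable ℝ (g μ ν))
    (hdet : ∀ y, 0 < Matrix.det (Matrix.of fun μ ν => g μ ν y))
    (hinv : ∀ μ ν x, (∑ σ, ginv μ σ x * g σ ν x) = if μ = ν then (1:ℝ) else 0)
    (μ : Fin n) (x : Fin n → ℝ) :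
    ∑ κ, Γ κ μ κ x
      = pd μ (fun y => Real.log (sqrtg g y)) x + torTr Γ μ x + nonmetTr Γ g ginv μ x := by
  rw [pd_log_sqrtg hg hdet hinv, nonmetTr_eq hsymm hinv, torTr, sum_sub_distrib]
  ring

theorem sqrtg_pos (hdet : ∀ y, 0 < Matrix.det (Matrix.of fun μ ν => g μ ν y))
    (x : Fin n → ℝ) : 0 < sqrtg g x :=
  Real.sqrt_pos.mpr (hdet x)

theorem differentiable_sqrtg (hg : ∀ μ ν, Differentiable ℝ (g μ ν))
    (hdet : ∀ y, 0 < Matrix.det (Matrix.of fun μ ν => g μ ν y)) :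
    Differentiable ℝ (sqrtg g) := fun x =>
  (hasFDerivAt_det g fun a b => hg a b x).differentiableAt.sqrt (hdet x).ne'

theorem transposed_deriv_density_eq (hsymm : ∀ μ ν, g μ ν = g ν μ)
    (hg : ∀ μ ν, Differentiable ℝ (g μ ν))
    (hdet : ∀ y, 0 < Matrix.det (Matrix.of fun μ ν => g μ ν y))
    (hinv : ∀ μ ν x, (∑ σ, ginv μ σ x * g σ ν x) = if μ = ν then (1:ℝ) else 0)
    {f : (Fin n → ℝ) → ℝ} {x : Fin n → ℝ} (hf : DifferentiableAt ℝ f x) (μ : Fin n) :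
    pd μ (fun y => f y * sqrtg g y) x - (∑ κ, Γ κ μ κ x) * (f x * sqrtg g x)
      = sqrtg g x * (pd μ f x - (torTr Γ μ x + nonmetTr Γ g ginv μ x) * f x) := by
  have hsqrtg : pd μ (sqrtg g) x = sqrtg g x * pd μ (fun y => Real.log (sqrtg g y)) x := by
    rw [pd_log (differentiable_sqrtg hg hdet x) (sqrtg_pos hdet x).ne',
      mul_div_cancel₀ _ (sqrtg_pos hdet x).ne']
  rw [pd_mul hf (differentiable_sqrtg hg hdet x), hsqrtg,
    connection_trace_eq hsymm hg hdet hinv]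
  ring

end Metric

section LogarithmicDerivative

variable {m : ℕ} {W : Fin m → (Fin m → ℝ) → ℝ} {f : (Fin m → ℝ) → ℝ}

theorem pd_log_of_pd_eq_mul {x : Fin m → ℝ} {μ : Fin m} {w : ℝ} (hf : DifferentiableAt ℝ f x)
    (hfx : f x ≠ 0) (h : pd μ f x = w * f x) : pd μ (fun y => Real.log (f y)) x = w := by
  rw [pd_log hf hfx, h, mul_div_cancel_right₀ _ hfx]

theorem exists_ne_zero_pd_eq_mul_iff :
    (∃ f : (Fin m → ℝ) → ℝ, Differentiable ℝ f ∧ (∀ x, f x ≠ 0) ∧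
        ∀ μ x, pd μ f x = W μ x * f x)
      ↔ ∃ θ : (Fin m → ℝ) → ℝ, Differentiable ℝ θ ∧ ∀ μ x, W μ x = pd μ θ x := by
  constructor
  · rintro ⟨f, hf, hf0, hfW⟩
    exact ⟨fun x => Real.log (f x), hf.log hf0, fun μ x =>
      (pd_log_of_pd_eq_mul (hf x) (hf0 x) (hfW μ x)).symm⟩
  · rintro ⟨θ, hθ, hθW⟩
    refine ⟨fun x => Real.exp (θ x), hθ.exp, fun x => (Real.exp_pos _).ne', fun μ x => ?_⟩
    rw [pd_comp (Real.hasDerivAt_exp _) (hθ x), hθW, mul_comm]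

theorem eq_const_mul_exp_of_pd_eq_mul {θ : (Fin m → ℝ) → ℝ} (hf : Differentiable ℝ f)
    (hfpos : ∀ x, 0 < f x) (hfW : ∀ μ x, pd μ f x = W μ x * f x) (hθ : Differentiable ℝ θ)
    (hθW : ∀ μ x, W μ x = pd μ θ x) : ∃ C, 0 < C ∧ ∀ x, f x = C * Real.exp (θ x) := by
  obtain ⟨c, hc⟩ := exists_eq_add_const_of_pd_eq (hf.log fun x => (hfpos x).ne') hθ
    fun μ x => by rw [pd_log_of_pd_eq_mul (hf x) (hfpos x).ne' (hfW μ x), hθW]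
  refine ⟨Real.exp c, Real.exp_pos c, fun x => ?_⟩
  rw [← Real.exp_log (hfpos x), hc x, Real.exp_add, mul_comm]

end LogarithmicDerivative

theorem transposed_constant_density_iff_exact_general {n : ℕ}
    (Γ : Fin n → Fin n → Fin n → (Fin n → ℝ) → ℝ)
    (g ginv : Fin n → Fin n → (Fin n → ℝ) → ℝ)
    (hsymm : ∀ μ ν, g μ ν = g ν μ)
    (hg : ∀ μ ν, Differentiable ℝ (g μ ν))
    (hdet : ∀ y, 0 < Matrix.det (Matrix.of fun μ ν => g μ ν y))
    (hinv : ∀ μ ν x, (∑ σ, ginv μ σ x * g σ ν x) = if μ = ν then (1:ℝ) else 0) :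
    ((∃ f : (Fin n → ℝ) → ℝ, Differentiable ℝ f ∧ (∀ x, f x ≠ 0) ∧
        ∀ μ x, pd μ (fun y => f y * sqrtg g y) x
            - (∑ κ, Γ κ μ κ x) * (f x * sqrtg g x) = 0)
      ↔ ∃ θ : (Fin n → ℝ) → ℝ, Differentiable ℝ θ ∧
          ∀ μ x, torTr Γ μ x + nonmetTr Γ g ginv μ x = pd μ θ x)
    ∧ ∀ f θ : (Fin n → ℝ) → ℝ, Differentiable ℝ f → (∀ x, 0 < f x) →
        (∀ μ x, pd μ (fun y => f y * sqrtg g y) x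
            - (∑ κ, Γ κ μ κ x) * (f x * sqrtg g x) = 0) →
        Differentiable ℝ θ →
        (∀ μ x, torTr Γ μ x + nonmetTr Γ g ginv μ x = pd μ θ x) →
        ∃ C : ℝ, 0 < C ∧ ∀ x, f x = C * Real.exp (θ x) := by
  have hD : ∀ f, Differentiable ℝ f → ∀ μ x,
      (pd μ (fun y => f y * sqrtg g y) x - (∑ κ, Γ κ μ κ x) * (f x * sqrtg g x) = 0
        ↔ pd μ f x = (torTr Γ μ x + nonmetTr Γ g ginv μ x) * f x) := fun f hf μ x => by
    rw [transposed_deriv_density_eq hsymm hg hdet hinv (hf x), mul_eq_zero,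
      or_iff_right (sqrtg_pos hdet x).ne', sub_eq_zero]
  refine ⟨?_, fun f θ hf hfpos hfD hθ hθW =>
    eq_const_mul_exp_of_pd_eq_mul hf hfpos (fun μ x => (hD f hf μ x).mp (hfD μ x)) hθ hθW⟩
  rw [← exists_ne_zero_pd_eq_mul_iff]
  exact exists_congr fun f => and_congr_right fun hf =>
    and_congr_right fun _ => forall₂_congr (hD f hf)

/-- There is a nowhere-vanishing `f` with `D̃_μ(f√g) = ∂_μ(f√g) - Γ_{κμ}^κ f√g = 0` iff the
1-form `(T_μ + V_μ)dx^μ` is exact; moreover any positive such `f` is `C e^θ` with `C > 0`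
where `T_μ + V_μ = ∂_μ θ`. -/
theorem transposed_constant_density_iff_exact {n : ℕ}
    (Γ : Fin n → Fin n → Fin n → (Fin n → ℝ) → ℝ)
    (g ginv : Fin n → Fin n → (Fin n → ℝ) → ℝ)
    (hsymm : ∀ μ ν, g μ ν = g ν μ)
    (hg : ∀ μ ν, Differentiable ℝ (g μ ν))
    (hdet : ∀ y, 0 < Matrix.det (Matrix.of fun μ ν => g μ ν y))
    (hinv : ∀ μ ν x, (∑ σ, ginv μ σ x * g σ ν x) = if μ = ν then (1:ℝ) else 0)
    (hinv' : ∀ μ ν x, (∑ σ, g μ σ x * ginv σ ν x) = if μ = ν then (1:ℝ) else 0) :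
    ((∃ f : (Fin n → ℝ) → ℝ, Differentiable ℝ f ∧ (∀ x, f x ≠ 0) ∧
        ∀ μ x, pd μ (fun y => f y * sqrtg g y) x
            - (∑ κ, Γ κ μ κ x) * (f x * sqrtg g x) = 0)
      ↔ ∃ θ : (Fin n → ℝ) → ℝ, Differentiable ℝ θ ∧
          ∀ μ x, torTr Γ μ x + nonmetTr Γ g ginv μ x = pd μ θ x)
    ∧ ∀ f θ : (Fin n → ℝ) → ℝ, Differentiable ℝ f → (∀ x, 0 < f x) →
        (∀ μ x, pd μ (fun y => f y * sqrtg g y) x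
            - (∑ κ, Γ κ μ κ x) * (f x * sqrtg g x) = 0) →
        Differentiable ℝ θ →
        (∀ μ x, torTr Γ μ x + nonmetTr Γ g ginv μ x = pd μ θ x) →
        ∃ C : ℝ, 0 < C ∧ ∀ x, f x = C * Real.exp (θ x) :=
  transposed_constant_density_iff_exact_general Γ g ginv hsymm hg hdet hinv
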